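/- arXiv:1506.08176 — 3 statements merged into one kernel-verified Lean document; each statement's English description precedes it below -/
import Mathlib

section
/- On a Lie group with left-invariant metric, a left-invariant vector field E is parallel (∇_X E = 0 for all left-invariant X) if and only if ad_E is skew-symmetric and E is orthogonal to the commutator subalgebra [𝔤,𝔤]. -/
open scoped RealInnerProductSpace

/-- On a Lie group with a left-invariant metric (modeled by an inner product and a Lie
bracket `br` on the Lie algebra, with the Levi-Civita connection `nab` given by the Koszul
formula), a left-invariant vector field `E` is parallel (`∇_X E = 0` for all `X`) if and
only if `ad_E` is skew-symmetric and `E` is orthogonal to the commutator subalgebra. -/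
theorem leftInvariant_parallel_iff_ad_skew_and_orth_commutator
    {V : Type*} [NormedAddCommGroup V] [InnerProductSpace ℝ V]
    (br : V →ₗ[ℝ] V →ₗ[ℝ] V)
    (hanti : ∀ X Y : V, br X Y = - br Y X)
    (hjac : ∀ X Y Z : V, br X (br Y Z) + br Y (br Z X) + br Z (br X Y) = 0)
    (nab : V → V → V)
    (hnab : ∀ X Y Z : V, ⟪nab X Y, Z⟫ =
      (1 / 2) * (⟪br X Y, Z⟫ - ⟪br Y Z, X⟫ + ⟪br Z X, Y⟫))
    (E : V) :
    (∀ X : V, nab X E = 0) ↔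
      ((∀ X Y : V, ⟪br E X, Y⟫ = - ⟪br E Y, X⟫) ∧ ∀ X Y : V, ⟪E, br X Y⟫ = 0) := by
  constructor
  · intro hpar
    -- For all X Z, the Koszul expression vanishes.
    have key : ∀ X Z : V, ⟪br X E, Z⟫ - ⟪br E Z, X⟫ + ⟪br Z X, E⟫ = 0 := by
      intro X Z
      have h := hnab X E Z
      rw [hpar X, inner_zero_left] at h
      linarith [h]
    -- Rewrite: -⟪br E X, Z⟫ - ⟪br E Z, X⟫ + ⟪br Z X, E⟫ = 0
    have key' : ∀ X Z : V, - ⟪br E X, Z⟫ - ⟪br E Z, X⟫ + ⟪br Z X, E⟫ = 0 := by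
      intro X Z
      have h := key X Z
      rw [hanti X E, inner_neg_left] at h
      linarith
    -- orthogonality: subtract key' X Z and key' Z X
    have horth : ∀ X Y : V, ⟪E, br X Y⟫ = 0 := by
      intro X Y
      have h1 := key' X Y
      have h2 := key' Y X
      have hs : ⟪br X Y, E⟫ = - ⟪br Y X, E⟫ := by rw [hanti X Y, inner_neg_left]
      have : ⟪br Y X, E⟫ = 0 := by linarith
      have : ⟪br X Y, E⟫ = 0 := by rw [hs, this, neg_zero]
      rw [real_inner_comm]; exact this
    refine ⟨?_, horth⟩
    intro X Y
    have h1 := key' X Y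
    have h2 := horth Y X
    rw [real_inner_comm] at h2
    linarith
  · rintro ⟨hskew, horth⟩ X
    have : ∀ Z : V, ⟪nab X E, Z⟫ = 0 := by
      intro Z
      rw [hnab X E Z]
      have h1 : ⟪br X E, Z⟫ = - ⟪br E X, Z⟫ := by rw [hanti X E, inner_neg_left]
      have h2 := hskew X Z
      have h3 := horth Z X
      rw [real_inner_comm] at h3
      linarith [h1, h2, h3]
    have := this (nab X E)
    rwa [real_inner_self_eq_norm_sq, pow_eq_zero_iff (by norm_num), norm_eq_zero] at this
end

section
/- Let 𝔰 be the (n+1)-dimensional solvable Lie algebra with orthonormal basis e₀,...,eₙ, brackets [e₀,eᵢ] = μᵢeᵢ for i ≥ 1 and [eᵢ,eⱼ] = 0 for i,j ≥ 1 (μᵢ real). Then the sectional curvature of the left-invariant metric in the direction of an orthonormal frame (X,Y), X = Σxᵢeᵢ, Y = Σyᵢeᵢ, equals K(X,Y) = −Σ_{i=1}^{n} μᵢ²(x₀yᵢ − y₀xᵢ)² − Σ_{1≤j<k≤n} μⱼμₖ(xⱼyₖ − yⱼxₖ)². -/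
/-!
Since `L` is symmetric and kills `b = e₀`, the connection formulas collapse the curvature term to
`⟪R(Y,X)X, Y⟫ = ⟪LX, Y⟫² - ⟪LX, X⟫⟪LY, Y⟫ - ‖[X, Y]‖²`, where `[X, Y] = L(x₀Y - y₀X)`.
The last term is `Σᵢ μᵢ²(x₀yᵢ - y₀xᵢ)²`, and the first two are minus the `μ`-weighted Lagrange
identity `⟪LX, X⟫⟪LY, Y⟫ - ⟪LX, Y⟫² = Σ_{j<k} μⱼμₖ(xⱼyₖ - yⱼxₖ)²` on `ℝⁿ = e₀^⊥`.
-/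

open scoped RealInnerProductSpace

/-- The operator `L` of the solvable extension: diagonal in the orthonormal basis
`e₀,…,eₙ` of `ℝ^{n+1}` with eigenvalues `μ₀,…,μₙ` (here `μ₀ = 0`, `e₀ = b`). -/
noncomputable def solvL (n : ℕ) (μ : Fin (n + 1) → ℝ)
    (x : EuclideanSpace ℝ (Fin (n + 1))) : EuclideanSpace ℝ (Fin (n + 1)) :=
  WithLp.toLp 2 (fun i => μ i * x i)

/-- The Levi-Civita covariant derivative of left-invariant fields on the solvable extension,
determined by `∇_b b = 0`, `∇_b u = 0`, `∇_u b = −Lu`, `∇_u v = ⟨Lu,v⟩b`. -/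
noncomputable def solvNabla (n : ℕ) (μ : Fin (n + 1) → ℝ)
    (X Y : EuclideanSpace ℝ (Fin (n + 1))) : EuclideanSpace ℝ (Fin (n + 1)) :=
  ⟪solvL n μ X, Y⟫ • (EuclideanSpace.single (0 : Fin (n + 1)) (1 : ℝ)) - Y 0 • solvL n μ X

/-- The Lie bracket of the solvable extension: `[e₀,eᵢ] = μᵢeᵢ` for `i ≥ 1`,
`[eᵢ,eⱼ] = 0` for `i,j ≥ 1`. -/
noncomputable def solvBracket (n : ℕ) (μ : Fin (n + 1) → ℝ)
    (X Y : EuclideanSpace ℝ (Fin (n + 1))) : EuclideanSpace ℝ (Fin (n + 1)) :=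
  X 0 • solvL n μ Y - Y 0 • solvL n μ X

/-- The curvature operator `R(X,Y)Z` of the Levi-Civita connection on the solvable
extension. -/
noncomputable def solvCurv (n : ℕ) (μ : Fin (n + 1) → ℝ)
    (X Y Z : EuclideanSpace ℝ (Fin (n + 1))) : EuclideanSpace ℝ (Fin (n + 1)) :=
  solvNabla n μ X (solvNabla n μ Y Z) - solvNabla n μ Y (solvNabla n μ X Z)
    - solvNabla n μ (solvBracket n μ X Y) Z

open Finset

section Lagrange

variable {ι : Type*} [LinearOrder ι]

theorem Finset.sum_sum_eq_two_nsmul_sum_sum_ite_lt {M : Type*} [AddCommMonoid M]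
    (s : Finset ι) (t : ι → ι → M) (hsymm : ∀ j k, t j k = t k j) (hdiag : ∀ j, t j j = 0) :
    ∑ j ∈ s, ∑ k ∈ s, t j k = 2 • ∑ j ∈ s, ∑ k ∈ s, if j < k then t j k else 0 := by
  have hsplit : ∀ j k, t j k = (if j < k then t j k else 0) + if k < j then t k j else 0 := by
    intro j k
    rcases lt_trichotomy j k with hjk | rfl | hkj
    · simp [hjk, hjk.not_gt]
    · simp [hdiag]
    · simp [hkj, hkj.not_gt, hsymm j k]
  simp_rw [two_nsmul, ← sum_add_distrib]
  conv_lhs => enter [2, j, 2, k]; rw [hsplit j k]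
  simp only [sum_add_distrib]
  exact congrArg _ sum_comm

theorem Finset.sum_mul_sum_sub_sq_eq_sum_sum_ite_lt (s : Finset ι) (μ x y : ι → ℝ) :
    (∑ i ∈ s, μ i * x i * x i) * (∑ i ∈ s, μ i * y i * y i) - (∑ i ∈ s, μ i * x i * y i) ^ 2 =
      ∑ j ∈ s, ∑ k ∈ s, if j < k then μ j * μ k * (x j * y k - y j * x k) ^ 2 else 0 := by
  have hfull := Finset.sum_sum_eq_two_nsmul_sum_sum_ite_lt s
    (fun j k => μ j * μ k * (x j * y k - y j * x k) ^ 2) (fun j k => by ring) (fun j => by ring)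
  have hexpand : ∑ j ∈ s, ∑ k ∈ s, μ j * μ k * (x j * y k - y j * x k) ^ 2 =
      2 * ((∑ i ∈ s, μ i * x i * x i) * (∑ i ∈ s, μ i * y i * y i)
        - (∑ i ∈ s, μ i * x i * y i) ^ 2) :=
    calc ∑ j ∈ s, ∑ k ∈ s, μ j * μ k * (x j * y k - y j * x k) ^ 2
        = ∑ j ∈ s, ∑ k ∈ s, (μ j * x j * x j * (μ k * y k * y k)
            + μ j * y j * y j * (μ k * x k * x k) - 2 * (μ j * x j * y j * (μ k * x k * y k))) :=
          sum_congr rfl fun j _ => sum_congr rfl fun k _ => by ring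
      _ = _ := by
          simp only [sum_add_distrib, sum_sub_distrib, ← mul_sum, ← sum_mul]
          ring
  rw [two_nsmul, hexpand] at hfull
  linarith

end Lagrange

section SolvableExtension

variable {n : ℕ} {μ : Fin (n + 1) → ℝ}

theorem inner_solvL_left (X Y : EuclideanSpace ℝ (Fin (n + 1))) :
    ⟪solvL n μ X, Y⟫ = ∑ i, μ i * X i * Y i := by
  simp only [solvL, PiLp.inner_apply, RCLike.inner_apply, conj_trivial]
  exact sum_congr rfl fun i _ => by ring

theorem inner_solvL_comm (X Y : EuclideanSpace ℝ (Fin (n + 1))) :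
    ⟪solvL n μ X, Y⟫ = ⟪solvL n μ Y, X⟫ := by
  simp only [inner_solvL_left]
  exact sum_congr rfl fun i _ => by ring

theorem inner_solvL_eq_sum_erase_zero (hμ0 : μ 0 = 0) (X Y : EuclideanSpace ℝ (Fin (n + 1))) :
    ⟪solvL n μ X, Y⟫ = ∑ i ∈ univ.erase 0, μ i * X i * Y i := by
  rw [inner_solvL_left, sum_erase _ (by simp [hμ0])]

theorem solvL_apply_zero (hμ0 : μ 0 = 0) (X : EuclideanSpace ℝ (Fin (n + 1))) :
    solvL n μ X 0 = 0 := by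
  simp [solvL, hμ0]

theorem solvNabla_apply_zero (hμ0 : μ 0 = 0) (X Y : EuclideanSpace ℝ (Fin (n + 1))) :
    solvNabla n μ X Y 0 = ⟪solvL n μ X, Y⟫ := by
  simp [solvNabla, solvL_apply_zero hμ0]

theorem inner_solvNabla_left (X Y Z : EuclideanSpace ℝ (Fin (n + 1))) :
    ⟪solvNabla n μ X Y, Z⟫ = ⟪solvL n μ X, Y⟫ * Z 0 - Y 0 * ⟪solvL n μ X, Z⟫ := by
  simp [solvNabla, inner_sub_left, real_inner_smul_left, EuclideanSpace.inner_single_left]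

theorem solvBracket_eq_solvL (X Y : EuclideanSpace ℝ (Fin (n + 1))) :
    solvBracket n μ X Y = solvL n μ (X 0 • Y - Y 0 • X) := by
  ext i
  simp only [solvBracket, solvL, PiLp.sub_apply, PiLp.smul_apply, PiLp.toLp_apply, smul_eq_mul]
  ring

theorem solvBracket_swap (X Y : EuclideanSpace ℝ (Fin (n + 1))) :
    solvBracket n μ Y X = -solvBracket n μ X Y := by
  simp only [solvBracket, neg_sub]

theorem inner_solvBracket_self (hμ0 : μ 0 = 0) (X Y : EuclideanSpace ℝ (Fin (n + 1))) :
    ⟪solvBracket n μ X Y, solvBracket n μ X Y⟫ =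
      ∑ i ∈ univ.erase 0, μ i ^ 2 * (X 0 * Y i - Y 0 * X i) ^ 2 := by
  rw [sum_erase _ (by simp [hμ0]), solvBracket_eq_solvL, inner_solvL_left]
  refine sum_congr rfl fun i _ => ?_
  simp only [solvL, PiLp.sub_apply, PiLp.smul_apply, PiLp.toLp_apply, smul_eq_mul]
  ring

theorem inner_solvCurv_self (hμ0 : μ 0 = 0) (X Y : EuclideanSpace ℝ (Fin (n + 1))) :
    ⟪solvCurv n μ Y X X, Y⟫ = ⟪solvL n μ X, Y⟫ ^ 2 - ⟪solvL n μ X, X⟫ * ⟪solvL n μ Y, Y⟫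
      - ⟪solvBracket n μ X Y, solvBracket n μ X Y⟫ := by
  have hYX : ⟪solvNabla n μ Y (solvNabla n μ X X), Y⟫ =
      -(X 0 * Y 0 * ⟪solvL n μ X, solvL n μ Y⟫) - ⟪solvL n μ X, X⟫ * ⟪solvL n μ Y, Y⟫ := by
    rw [inner_solvNabla_left, solvNabla_apply_zero hμ0, real_inner_comm, inner_solvNabla_left,
      solvL_apply_zero hμ0, real_inner_comm (solvL n μ Y)]
    ring
  have hXY : ⟪solvNabla n μ X (solvNabla n μ Y X), Y⟫ =
      -(X 0 * Y 0 * ⟪solvL n μ X, solvL n μ Y⟫) - ⟪solvL n μ X, Y⟫ ^ 2 := by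
    rw [inner_solvNabla_left, solvNabla_apply_zero hμ0, real_inner_comm, inner_solvNabla_left,
      solvL_apply_zero hμ0, inner_solvL_comm Y X, real_inner_comm (solvL n μ X)]
    ring
  have hbracket : ⟪solvNabla n μ (solvBracket n μ Y X) X, Y⟫ =
      ⟪solvBracket n μ X Y, solvBracket n μ X Y⟫ :=
    calc ⟪solvNabla n μ (solvBracket n μ Y X) X, Y⟫
        = ⟪solvL n μ (solvBracket n μ Y X), Y 0 • X - X 0 • Y⟫ := by
          rw [inner_solvNabla_left, inner_sub_right, real_inner_smul_right,
            real_inner_smul_right]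
          ring
      _ = ⟪solvBracket n μ Y X, solvBracket n μ Y X⟫ := by
          rw [inner_solvL_comm, ← solvBracket_eq_solvL]
      _ = ⟪solvBracket n μ X Y, solvBracket n μ X Y⟫ := by
          rw [solvBracket_swap, inner_neg_neg]
  rw [solvCurv, inner_sub_left, inner_sub_left, hYX, hXY, hbracket]
  ring

end SolvableExtension

theorem solv_sectional_curvature_general (n : ℕ) (μ : Fin (n + 1) → ℝ) (hμ0 : μ 0 = 0)
    (X Y : EuclideanSpace ℝ (Fin (n + 1))) :
    ⟪solvCurv n μ Y X X, Y⟫ =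
      -(∑ i ∈ Finset.univ.erase (0 : Fin (n + 1)), μ i ^ 2 * (X 0 * Y i - Y 0 * X i) ^ 2)
        - ∑ j ∈ Finset.univ.erase (0 : Fin (n + 1)),
            ∑ k ∈ Finset.univ.erase (0 : Fin (n + 1)),
              if j < k then μ j * μ k * (X j * Y k - Y j * X k) ^ 2 else 0 := by
  rw [inner_solvCurv_self hμ0, inner_solvBracket_self hμ0,
    ← sum_mul_sum_sub_sq_eq_sum_sum_ite_lt, inner_solvL_eq_sum_erase_zero hμ0 X Y,
    inner_solvL_eq_sum_erase_zero hμ0 X X, inner_solvL_eq_sum_erase_zero hμ0 Y Y]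
  ring

/-- The sectional curvature of the left-invariant metric on the solvable extension in the
direction of an orthonormal frame `(X,Y)`:
`K(X,Y) = −Σ_{i≥1} μᵢ²(x₀yᵢ − y₀xᵢ)² − Σ_{1≤j<k} μⱼμₖ(xⱼyₖ − yⱼxₖ)²`. -/
theorem solv_sectional_curvature (n : ℕ) (μ : Fin (n + 1) → ℝ) (hμ0 : μ 0 = 0)
    (X Y : EuclideanSpace ℝ (Fin (n + 1)))
    (hX : ⟪X, X⟫ = 1) (hY : ⟪Y, Y⟫ = 1) (hXY : ⟪X, Y⟫ = 0) :
    ⟪solvCurv n μ Y X X, Y⟫ =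
      -(∑ i ∈ Finset.univ.erase (0 : Fin (n + 1)), μ i ^ 2 * (X 0 * Y i - Y 0 * X i) ^ 2)
        - ∑ j ∈ Finset.univ.erase (0 : Fin (n + 1)),
            ∑ k ∈ Finset.univ.erase (0 : Fin (n + 1)),
              if j < k then μ j * μ k * (X j * Y k - Y j * X k) ^ 2 else 0 :=
  solv_sectional_curvature_general n μ hμ0 X Y
end

section
/- Let G be a unimodular Lie group with left-invariant metric given by an inner product on 𝔤, and let E ∈ 𝔤 be a unit vector such that (W2): ⟨[E,Y],Y⟩ = 0 for all Y ⊥ E, and (W1): the sectional curvature K(E,Y) ≤ 0 for all Y ⊥ E. Then E is parallel, i.e., ∇_Y E = 0 for all Y ∈ 𝔤 (equivalently, ad_E is skew-symmetric and E ⊥ [𝔤,𝔤]). -/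
open scoped RealInnerProductSpace

private lemma trace_eq_sum_inner_aux
    {V : Type*} [NormedAddCommGroup V] [InnerProductSpace ℝ V]
    {ι : Type*} [Fintype ι] [DecidableEq ι]
    (b : OrthonormalBasis ι ℝ V) (f : V →ₗ[ℝ] V) :
    LinearMap.trace ℝ V f = ∑ i, ⟪f (b i), b i⟫ := by
  rw [LinearMap.trace_eq_matrix_trace ℝ b.toBasis f, Matrix.trace]
  congr 1
  ext i
  rw [Matrix.diag_apply, LinearMap.toMatrix_apply, OrthonormalBasis.coe_toBasis,
    OrthonormalBasis.coe_toBasis_repr_apply, OrthonormalBasis.repr_apply_apply,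
    real_inner_comm]

/-- Let `G` be a unimodular Lie group with a left-invariant metric, modeled by a
finite-dimensional inner product space `V` with Lie bracket `br` (antisymmetric, Jacobi)
such that `tr(ad_X) = 0` for all `X`, and Levi-Civita connection `nab` given by the Koszul
formula.  Let `E` be a unit vector satisfying
(W2): `⟨[E,Y],Y⟩ = 0` for all `Y ⊥ E`, and
(W1): the sectional curvature `K(E,Y) = |∇_Y E|² − σ(Y)² − ⟨[U(E,E),Y],Y⟩ ≤ 0`
for all unit `Y ⊥ E`, where `σ(Y) = ⟨[E,Y],E⟩` and `u = U(E,E)` is defined by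
`⟨u,Z⟩ = ⟨[Z,E],E⟩`.  Then `E` is parallel: `∇_Y E = 0` for all `Y`. -/
theorem unimodular_W1_W2_implies_parallel
    {V : Type*} [NormedAddCommGroup V] [InnerProductSpace ℝ V] [FiniteDimensional ℝ V]
    (br : V →ₗ[ℝ] V →ₗ[ℝ] V)
    (hanti : ∀ X Y : V, br X Y = - br Y X)
    (hjac : ∀ X Y Z : V, br X (br Y Z) + br Y (br Z X) + br Z (br X Y) = 0)
    (hunimod : ∀ X : V, LinearMap.trace ℝ V (br X) = 0)
    (nab : V → V → V)
    (hnab : ∀ X Y Z : V, ⟪nab X Y, Z⟫ =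
      (1 / 2) * (⟪br X Y, Z⟫ - ⟪br Y Z, X⟫ + ⟪br Z X, Y⟫))
    (E : V) (hE : ⟪E, E⟫ = 1)
    (u : V) (hu : ∀ Z : V, ⟪u, Z⟫ = ⟪br Z E, E⟫)
    (hW2 : ∀ Y : V, ⟪Y, E⟫ = 0 → ⟪br E Y, Y⟫ = 0)
    (hW1 : ∀ Y : V, ⟪Y, Y⟫ = 1 → ⟪Y, E⟫ = 0 →
      ⟪nab Y E, nab Y E⟫ - ⟪br E Y, E⟫ ^ 2 - ⟪br u Y, Y⟫ ≤ 0) :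
    ∀ Y : V, nab Y E = 0 := by
  classical
  -- basic facts
  have hbrself : ∀ X : V, br X X = 0 := by
    intro X
    have h : br X X + br X X = 0 := by nth_rewrite 2 [hanti X X]; simp
    have h2 : (2 : ℝ) • br X X = 0 := by rw [two_smul]; exact h
    rcases smul_eq_zero.mp h2 with h' | h'
    · norm_num at h'
    · exact h'
  have huE : ⟪u, E⟫ = 0 := by
    rw [hu E, hbrself E, inner_zero_left]
  -- ⟪br E Y, E⟫ = -⟪u, Y⟫
  have hsigma : ∀ Y : V, ⟪br E Y, E⟫ = -⟪u, Y⟫ := by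
    intro Y
    rw [hanti E Y, inner_neg_left, ← hu Y]
  -- key lemma: for unit Y ⟂ E, both g(Y) = 0 and ∇_Y E = 0
  have key : ∀ Y : V, ⟪Y, Y⟫ = 1 → ⟪Y, E⟫ = 0 →
      (⟪u, Y⟫ ^ 2 + ⟪br u Y, Y⟫ = 0 ∧ nab Y E = 0) := by
    intro Y hY1 hYE
    have hEY : E ≠ Y := by
      intro h
      rw [← h] at hYE
      rw [real_inner_comm] at hYE
      rw [hE] at hYE
      exact one_ne_zero hYE
    -- orthonormal set {E, Y}
    have horth : Orthonormal ℝ ((↑) : ({E, Y} : Set V) → V) := by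
      rw [orthonormal_subtype_iff_ite]
      intro v hv w hw
      simp only [Set.mem_insert_iff, Set.mem_singleton_iff] at hv hw
      rcases hv with rfl | rfl <;> rcases hw with rfl | rfl
      · rw [if_pos rfl]; exact hE
      · rw [if_neg hEY, real_inner_comm]; exact hYE
      · rw [if_neg (Ne.symm hEY)]; exact hYE
      · rw [if_pos rfl]; exact hY1
    obtain ⟨s, b, hsub, hb⟩ := horth.exists_orthonormalBasis_extension
    have hEs : E ∈ s := hsub (by simp)
    have hYs : Y ∈ s := hsub (by simp)
    have hbe : ∀ i : ↥s, b i = (i : V) := fun i => congrFun hb i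
    let e0 : ↥s := ⟨E, hEs⟩
    let y0 : ↥s := ⟨Y, hYs⟩
    have hbe0 : b e0 = E := hbe e0
    have hby0 : b y0 = Y := hbe y0
    -- the total sum of g over the basis equals ⟪u,u⟫
    have hsum : (∑ i : ↥s, (⟪u, b i⟫ ^ 2 + ⟪br u (b i), b i⟫)) = ⟪u, u⟫ := by
      rw [Finset.sum_add_distrib]
      have h1 : (∑ i : ↥s, ⟪u, b i⟫ ^ 2) = ⟪u, u⟫ := by
        rw [← b.sum_inner_mul_inner u u]
        congr 1; ext i; rw [real_inner_comm (b i) u]; ring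
      have h2 : (∑ i : ↥s, ⟪br u (b i), b i⟫) = 0 := by
        rw [← trace_eq_sum_inner_aux b (br u)]; exact hunimod u
      rw [h1, h2, add_zero]
    have hgE : ⟪u, b e0⟫ ^ 2 + ⟪br u (b e0), b e0⟫ = ⟪u, u⟫ := by
      rw [hbe0, huE, ← hu u]; ring
    -- each off-E term is nonnegative
    have hnonneg : ∀ i ∈ Finset.univ.erase e0,
        0 ≤ ⟪u, b i⟫ ^ 2 + ⟪br u (b i), b i⟫ := by
      intro i hi
      have hine : i ≠ e0 := Finset.ne_of_mem_erase hi
      have hbi1 : ⟪b i, b i⟫ = 1 := by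
        rw [real_inner_self_eq_norm_sq, b.orthonormal.1 i, one_pow]
      have hbiE : ⟪b i, E⟫ = 0 := by
        have h : ⟪b i, b e0⟫ = 0 := b.orthonormal.2 hine
        rwa [hbe0] at h
      have h1 := hW1 (b i) hbi1 hbiE
      have h2 : ⟪br E (b i), E⟫ ^ 2 = ⟪u, b i⟫ ^ 2 := by rw [hsigma]; ring
      have h3 : (0:ℝ) ≤ ⟪nab (b i) E, nab (b i) E⟫ := real_inner_self_nonneg
      linarith
    -- the off-E sum is zero
    have hsplit : (⟪u, b e0⟫ ^ 2 + ⟪br u (b e0), b e0⟫) +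
        (∑ i ∈ Finset.univ.erase e0, (⟪u, b i⟫ ^ 2 + ⟪br u (b i), b i⟫)) =
        ∑ i : ↥s, (⟪u, b i⟫ ^ 2 + ⟪br u (b i), b i⟫) :=
      Finset.add_sum_erase _ (fun i : ↥s => (⟪u, b i⟫ ^ 2 + ⟪br u (b i), b i⟫ : ℝ))
        (Finset.mem_univ e0)
    have hsum' : (∑ i ∈ Finset.univ.erase e0, (⟪u, b i⟫ ^ 2 + ⟪br u (b i), b i⟫)) = 0 := by
      linarith [hsplit, hsum, hgE]
    have hall := (Finset.sum_eq_zero_iff_of_nonneg hnonneg).mp hsum'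
    have hy0mem : y0 ∈ Finset.univ.erase e0 := by
      refine Finset.mem_erase.mpr ⟨?_, Finset.mem_univ _⟩
      intro h
      have h' : Y = E := congrArg Subtype.val h
      exact hEY h'.symm
    have hgY : ⟪u, Y⟫ ^ 2 + ⟪br u Y, Y⟫ = 0 := by
      have := hall y0 hy0mem
      rwa [hby0] at this
    refine ⟨hgY, ?_⟩
    have h1 := hW1 Y hY1 hYE
    have h2 : ⟪br E Y, E⟫ ^ 2 = ⟪u, Y⟫ ^ 2 := by rw [hsigma]; ring
    have h3 : ⟪nab Y E, nab Y E⟫ = 0 := by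
      have h4 : (0:ℝ) ≤ ⟪nab Y E, nab Y E⟫ := real_inner_self_nonneg
      linarith
    exact inner_self_eq_zero.mp h3
  -- u = 0
  have hu0 : u = 0 := by
    by_contra h
    have hn : ‖u‖ ≠ 0 := fun h' => h (norm_eq_zero.mp h')
    have hYu1 : ⟪(‖u‖⁻¹ • u : V), (‖u‖⁻¹ • u : V)⟫ = 1 := by
      rw [real_inner_smul_left, real_inner_smul_right, real_inner_self_eq_norm_sq]
      field_simp
    have hYuE : ⟪(‖u‖⁻¹ • u : V), E⟫ = 0 := by
      rw [real_inner_smul_left, huE, mul_zero]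
    obtain ⟨hg, -⟩ := key (‖u‖⁻¹ • u) hYu1 hYuE
    rw [real_inner_smul_right, real_inner_self_eq_norm_sq, map_smul, hbrself u] at hg
    simp only [smul_zero, inner_zero_left, add_zero] at hg
    have h5 : (‖u‖⁻¹ * ‖u‖ ^ 2) = ‖u‖ := by field_simp
    rw [h5] at hg
    exact hn ((pow_eq_zero_iff two_ne_zero).mp hg)
  -- bracket with E pairs to zero against E
  have hz : ∀ Z : V, ⟪br Z E, E⟫ = 0 := by
    intro Z; rw [← hu Z, hu0, inner_zero_left]
  have hz' : ∀ Z : V, ⟪br E Z, E⟫ = 0 := by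
    intro Z; rw [hsigma, hu0, inner_zero_left, neg_zero]
  -- perpendicular vectors
  have hperp : ∀ W : V, ⟪W, E⟫ = 0 → ∀ Z : V, ⟪nab W E, Z⟫ = 0 := by
    intro W hW Z
    rcases eq_or_ne W 0 with rfl | h0
    · rw [hnab]; simp
    · have hn : ‖W‖ ≠ 0 := fun h' => h0 (norm_eq_zero.mp h')
      have hYw1 : ⟪(‖W‖⁻¹ • W : V), (‖W‖⁻¹ • W : V)⟫ = 1 := by
        rw [real_inner_smul_left, real_inner_smul_right, real_inner_self_eq_norm_sq]
        field_simp
      have hYwE : ⟪(‖W‖⁻¹ • W : V), E⟫ = 0 := by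
        rw [real_inner_smul_left, hW, mul_zero]
      obtain ⟨-, hzero⟩ := key (‖W‖⁻¹ • W) hYw1 hYwE
      have hq := hnab (‖W‖⁻¹ • W) E Z
      rw [hzero, inner_zero_left] at hq
      have e1 : ‖W‖ * ⟪br (‖W‖⁻¹ • W) E, Z⟫ = ⟪br W E, Z⟫ := by
        rw [map_smul, LinearMap.smul_apply, real_inner_smul_left, ← mul_assoc,
          mul_inv_cancel₀ hn, one_mul]
      have e2 : ‖W‖ * ⟪br E Z, ‖W‖⁻¹ • W⟫ = ⟪br E Z, W⟫ := by
        rw [real_inner_smul_right, ← mul_assoc, mul_inv_cancel₀ hn, one_mul]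
      have e3 : ‖W‖ * ⟪br Z (‖W‖⁻¹ • W), E⟫ = ⟪br Z W, E⟫ := by
        rw [map_smul, real_inner_smul_left, ← mul_assoc, mul_inv_cancel₀ hn, one_mul]
      rw [hnab]
      linear_combination (-(1/2 : ℝ)) * e1 + (1/2 : ℝ) * e2 - (1/2 : ℝ) * e3 - ‖W‖ * hq
  -- conclusion
  intro Y
  have hmain : ∀ Z : V, ⟪nab Y E, Z⟫ = 0 := by
    intro Z
    have hW : ⟪Y - ⟪Y, E⟫ • E, E⟫ = 0 := by
      rw [inner_sub_left, real_inner_smul_left, hE, mul_one, sub_self]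
    have hWp := hperp (Y - ⟪Y, E⟫ • E) hW Z
    rw [hnab] at hWp
    simp only [map_sub, map_smul, LinearMap.sub_apply, LinearMap.smul_apply,
      inner_sub_left, inner_sub_right, real_inner_smul_left, real_inner_smul_right,
      hbrself, inner_zero_left, smul_zero, hz, hz', mul_zero, sub_zero] at hWp
    rw [hnab]
    linarith [hWp]
  have := hmain (nab Y E)
  exact inner_self_eq_zero.mp this
end
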